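/- arXiv:1608.02515 — 6 statements merged into one kernel-verified Lean document; each statement's English description precedes it below -/
import Mathlib

section
/- Let V be a finite set, let f : 2^V → ℤ be skew-supermodular, and let h : 2^V → ℤ be a symmetric submodular function with nonnegative values. Then the function g = f − h (defined by g(S) = f(S) − h(S) for all S ⊆ V) is skew-supermodular. -/
open Finset

/-- A set function `f` on subsets of a finite ground set `V` is skew-supermodular if
for all `A, B` at least one of the two inequalities holds. -/
def SkewSupermodular {V : Type*} [DecidableEq V] (f : Finset V → ℤ) : Prop :=
  ∀ A B : Finset V,
    f A + f B ≤ f (A ∩ B) + f (A ∪ B) ∨ f A + f B ≤ f (A \ B) + f (B \ A)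

/-- Submodularity: `h(A) + h(B) ≥ h(A ∪ B) + h(A ∩ B)`. -/
def SubmodularFn {V : Type*} [DecidableEq V] (h : Finset V → ℤ) : Prop :=
  ∀ A B : Finset V, h (A ∪ B) + h (A ∩ B) ≤ h A + h B

/-- Symmetry: `h(S) = h(V \ S)`. -/
def SymmetricFn {V : Type*} [Fintype V] [DecidableEq V] (h : Finset V → ℤ) : Prop :=
  ∀ S : Finset V, h S = h (Finset.univ \ S)

def PosimodularFn {V : Type*} [DecidableEq V] (h : Finset V → ℤ) : Prop :=
  ∀ A B : Finset V, h (A \ B) + h (B \ A) ≤ h A + h B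

/-- Submodularity applied to `A` and the complement of `B`; symmetry turns the union into `B \ A`. -/
theorem SubmodularFn.posimodular {V : Type*} [Fintype V] [DecidableEq V] {h : Finset V → ℤ}
    (hsub : SubmodularFn h) (hsym : SymmetricFn h) : PosimodularFn h := by
  intro A B
  have hinter : A ∩ (univ \ B) = A \ B := by
    ext x; simp
  have hcompl_union : univ \ (A ∪ (univ \ B)) = B \ A := by
    ext x; simp; tauto
  have h_union : h (A ∪ (univ \ B)) = h (B \ A) := by
    rw [hsym, hcompl_union]
  have := hsub A (univ \ B)
  rw [hinter, h_union, ← hsym B] at this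
  linarith

theorem SkewSupermodular.sub {V : Type*} [DecidableEq V] {f h : Finset V → ℤ}
    (hf : SkewSupermodular f) (hsub : SubmodularFn h) (hpos : PosimodularFn h) :
    SkewSupermodular (fun S => f S - h S) := by
  intro A B
  rcases hf A B with hmod | hskew
  · left
    linarith [hsub A B]
  · right
    linarith [hpos A B]

theorem stmt0_general {V : Type*} [Fintype V] [DecidableEq V]
    (f h : Finset V → ℤ)
    (hf : SkewSupermodular f) (hsub : SubmodularFn h) (hsym : SymmetricFn h) :
    SkewSupermodular (fun S => f S - h S) :=
  hf.sub hsub (hsub.posimodular hsym)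

/-- If `f` is skew-supermodular and `h` is a nonnegative symmetric submodular function,
then `g = f - h` is skew-supermodular. -/
theorem stmt0 {V : Type*} [Fintype V] [DecidableEq V]
    (f h : Finset V → ℤ)
    (hf : SkewSupermodular f) (hsub : SubmodularFn h) (hsym : SymmetricFn h)
    (hnonneg : ∀ S : Finset V, 0 ≤ h S) :
    SkewSupermodular (fun S => f S - h S) :=
  stmt0_general f h hf hsub hsym
end

section
/- Let V be a finite set, let f : 2^V → ℤ be a skew-supermodular function, and let F be a finite multiset of hyperedges on V (each hyperedge a nonempty subset of V). Then the residual requirement function g : 2^V → ℤ defined by g(S) = f(S) − |δ_F(S)| is skew-supermodular. -/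
/-!
Subtracting a function that is both submodular and posimodular preserves skew-supermodularity,
since each of the two alternatives in the definition is matched by one of these inequalities.
The cut function of a hypergraph is a sum over hyperedges of crossing indicators, and each
crossing indicator is submodular and posimodular: a hyperedge crossing `A ∩ B` or `A ∪ B`
(resp. `A \ B` or `B \ A`) crosses `A` or `B`, and one crossing both crosses both.
-/

open Finset

/-- The cut value `|δ_F(S)|` of a multiset of hyperedges, encoded as an indexed family
`H : ι → Finset V` (the index type `ι` accounts for multiplicity). -/
def hyperCut {V ι : Type*} [DecidableEq V] [Fintype ι] (H : ι → Finset V) (S : Finset V) : ℤ :=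
  ((Finset.univ.filter (fun i => (H i ∩ S).Nonempty ∧ (H i \ S).Nonempty)).card : ℤ)

section

variable {V : Type*} [DecidableEq V]

def Submodular (g : Finset V → ℤ) : Prop :=
  ∀ A B : Finset V, g (A ∩ B) + g (A ∪ B) ≤ g A + g B

def Posimodular (g : Finset V → ℤ) : Prop :=
  ∀ A B : Finset V, g (A \ B) + g (B \ A) ≤ g A + g B

theorem SkewSupermodular.sub_s5 {f g : Finset V → ℤ} (hf : SkewSupermodular f)
    (hsub : Submodular g) (hpos : Posimodular g) : SkewSupermodular (f - g) := by
  intro A B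
  rcases hf A B with h | h
  · exact Or.inl (by have := hsub A B; simp only [Pi.sub_apply]; linarith)
  · exact Or.inr (by have := hpos A B; simp only [Pi.sub_apply]; linarith)

theorem Submodular.sum {ι : Type*} {s : Finset ι} {g : ι → Finset V → ℤ}
    (hg : ∀ i ∈ s, Submodular (g i)) : Submodular (fun S => ∑ i ∈ s, g i S) := by
  intro A B
  simp only [← sum_add_distrib]
  exact sum_le_sum fun i hi => hg i hi A B

theorem Posimodular.sum {ι : Type*} {s : Finset ι} {g : ι → Finset V → ℤ}
    (hg : ∀ i ∈ s, Posimodular (g i)) : Posimodular (fun S => ∑ i ∈ s, g i S) := by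
  intro A B
  simp only [← sum_add_distrib]
  exact sum_le_sum fun i hi => hg i hi A B

theorem ite_add_ite_le_ite_add_ite {p q r s : Prop} [Decidable p] [Decidable q] [Decidable r]
    [Decidable s] (hand : p ∧ q → r ∧ s) (hor : p ∨ q → r ∨ s) :
    ((if p then 1 else 0) + (if q then 1 else 0) : ℤ) ≤
      (if r then 1 else 0) + (if s then 1 else 0) := by
  split_ifs <;> simp_all

def Crosses (h S : Finset V) : Prop :=
  (h ∩ S).Nonempty ∧ (h \ S).Nonempty

instance (h S : Finset V) : Decidable (Crosses h S) :=
  inferInstanceAs (Decidable (_ ∧ _))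

def crossing (h S : Finset V) : ℤ :=
  if Crosses h S then 1 else 0

namespace Crosses

variable {h A B : Finset V}

theorem and_of_inter_union (hAB : Crosses h (A ∩ B) ∧ Crosses h (A ∪ B)) :
    Crosses h A ∧ Crosses h B := by
  simp only [Crosses, Finset.Nonempty, mem_inter, mem_sdiff, mem_union] at hAB ⊢
  grind

theorem or_of_inter_union (hAB : Crosses h (A ∩ B) ∨ Crosses h (A ∪ B)) :
    Crosses h A ∨ Crosses h B := by
  simp only [Crosses, Finset.Nonempty, mem_inter, mem_sdiff, mem_union] at hAB ⊢
  grind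

theorem and_of_sdiff (hAB : Crosses h (A \ B) ∧ Crosses h (B \ A)) :
    Crosses h A ∧ Crosses h B := by
  simp only [Crosses, Finset.Nonempty, mem_inter, mem_sdiff] at hAB ⊢
  grind

theorem or_of_sdiff (hAB : Crosses h (A \ B) ∨ Crosses h (B \ A)) :
    Crosses h A ∨ Crosses h B := by
  simp only [Crosses, Finset.Nonempty, mem_inter, mem_sdiff] at hAB ⊢
  grind

end Crosses

theorem submodular_crossing (h : Finset V) : Submodular (crossing h) := fun _ _ =>
  ite_add_ite_le_ite_add_ite Crosses.and_of_inter_union Crosses.or_of_inter_union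

theorem posimodular_crossing (h : Finset V) : Posimodular (crossing h) := fun _ _ =>
  ite_add_ite_le_ite_add_ite Crosses.and_of_sdiff Crosses.or_of_sdiff

theorem hyperCut_eq_sum_crossing {ι : Type*} [Fintype ι] (H : ι → Finset V) :
    hyperCut H = fun S => ∑ i, crossing (H i) S := by
  ext S
  simp only [hyperCut, crossing, Crosses, card_filter]
  push_cast
  rfl

end

theorem stmt5_general {V ι : Type*} [DecidableEq V] [Fintype ι]
    (f : Finset V → ℤ) (hf : SkewSupermodular f)
    (H : ι → Finset V) :
    SkewSupermodular (fun S => f S - hyperCut H S) := by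
  rw [hyperCut_eq_sum_crossing]
  exact hf.sub_s5 (Submodular.sum fun i _ => submodular_crossing (H i))
    (Posimodular.sum fun i _ => posimodular_crossing (H i))

/-- If `f` is skew-supermodular and `F` is a finite multiset of hyperedges on `V` (each a
nonempty subset of `V`), then the residual function `g(S) = f(S) - |δ_F(S)|` is
skew-supermodular. -/
theorem stmt5 {V ι : Type*} [Fintype V] [DecidableEq V] [Fintype ι]
    (f : Finset V → ℤ) (hf : SkewSupermodular f)
    (H : ι → Finset V) (hH : ∀ i, (H i).Nonempty) :
    SkewSupermodular (fun S => f S - hyperCut H S) :=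
  stmt5_general f hf H
end

section
/- Let V be a finite set and let r assign a nonnegative integer r(uv) to each unordered pair of distinct vertices u, v ∈ V. Define f : 2^V → ℤ by f(S) = max { r(uv) : u ∈ S, v ∉ S } for ∅ ⊊ S ⊊ V, and f(∅) = f(V) = 0. Then f is skew-supermodular. -/
open Finset

/-!
A pair `u, v` separated by `A` stays separated by `A ∩ B` or `A \ B` (split the side of `A`
containing `u` by `B`), and likewise by `A ∪ B` or `B \ A`. Applied to a pair attaining the
maximum in `f A`, this gives `f A ≤ f (A ∩ B)` or `f A ≤ f (A \ B)`, and `f A ≤ f (A ∪ B)` or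
`f A ≤ f (B \ A)`; the same holds with `A` and `B` exchanged, and these four alternatives
already force one of the two skew-supermodular inequalities.
-/

theorem add_le_add_or_add_le_add_of_le_or_le {x y p q s t : ℤ}
    (hx₁ : x ≤ p ∨ x ≤ s) (hx₂ : x ≤ q ∨ x ≤ t)
    (hy₁ : y ≤ p ∨ y ≤ t) (hy₂ : y ≤ q ∨ y ≤ s) :
    x + y ≤ p + q ∨ x + y ≤ s + t := by
  omega

section CutRequirement

variable {V : Type*} [DecidableEq V]

theorem xor_mem_inter_or_xor_mem_sdiff {A B : Finset V} {u v : V} (hu : u ∈ A) (hv : v ∉ A) :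
    Xor (u ∈ A ∩ B) (v ∈ A ∩ B) ∨ Xor (u ∈ A \ B) (v ∈ A \ B) := by
  by_cases huB : u ∈ B <;> simp [Xor, hu, hv, huB]

theorem xor_mem_union_or_xor_mem_sdiff {A B : Finset V} {u v : V} (hu : u ∈ A) (hv : v ∉ A) :
    Xor (u ∈ A ∪ B) (v ∈ A ∪ B) ∨ Xor (u ∈ B \ A) (v ∈ B \ A) := by
  by_cases hvB : v ∈ B <;> simp [Xor, hu, hv, hvB]

variable [Fintype V]

def cutRequirement (r : V → V → ℕ) (S : Finset V) : ℕ :=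
  (S ×ˢ Sᶜ).sup fun p => r p.1 p.2

theorem le_cutRequirement_of_xor {r : V → V → ℕ} (hr : ∀ u v, r u v = r v u)
    {S : Finset V} {u v : V} (h : Xor (u ∈ S) (v ∈ S)) : r u v ≤ cutRequirement r S := by
  rcases h with ⟨hu, hv⟩ | ⟨hv, hu⟩
  · exact le_sup (f := fun p : V × V => r p.1 p.2) (b := (u, v))
      (mem_product.2 ⟨hu, mem_compl.2 hv⟩)
  · rw [hr]
    exact le_sup (f := fun p : V × V => r p.1 p.2) (b := (v, u))
      (mem_product.2 ⟨hv, mem_compl.2 hu⟩)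

theorem cutRequirement_le_or_le {r : V → V → ℕ} (hr : ∀ u v, r u v = r v u)
    {S T T' : Finset V}
    (h : ∀ u ∈ S, ∀ v ∉ S, Xor (u ∈ T) (v ∈ T) ∨ Xor (u ∈ T') (v ∈ T')) :
    cutRequirement r S ≤ cutRequirement r T ∨ cutRequirement r S ≤ cutRequirement r T' := by
  refine le_max_iff.1 (Finset.sup_le fun p hp => ?_)
  obtain ⟨hu, hv⟩ := mem_product.1 hp
  rcases h p.1 hu p.2 (mem_compl.1 hv) with hT | hT'
  · exact le_max_of_le_left (le_cutRequirement_of_xor hr hT)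
  · exact le_max_of_le_right (le_cutRequirement_of_xor hr hT')

end CutRequirement

/-- The SNDP requirement function: given symmetric nonnegative requirements `r u v` on
unordered pairs of distinct vertices, the function
`f(S) = max { r u v : u ∈ S, v ∉ S }` (with `f(∅) = f(V) = 0`, the max of the empty set
being `0`) is skew-supermodular. -/
theorem stmt6 {V : Type*} [Fintype V] [DecidableEq V]
    (r : V → V → ℕ) (hr : ∀ u v : V, r u v = r v u)
    (f : Finset V → ℤ)
    (hf : ∀ S : Finset V, f S = (((S ×ˢ Sᶜ).sup fun p => r p.1 p.2 : ℕ) : ℤ)) :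
    SkewSupermodular f := by
  have hf' : f = fun S => (cutRequirement r S : ℤ) := funext hf
  subst hf'
  intro A B
  have hA₁ := cutRequirement_le_or_le hr (S := A) (T := A ∩ B) (T' := A \ B)
    fun _ hu _ hv => xor_mem_inter_or_xor_mem_sdiff hu hv
  have hA₂ := cutRequirement_le_or_le hr (S := A) (T := A ∪ B) (T' := B \ A)
    fun _ hu _ hv => xor_mem_union_or_xor_mem_sdiff hu hv
  have hB₁ := cutRequirement_le_or_le hr (S := B) (T := B ∩ A) (T' := B \ A)
    fun _ hu _ hv => xor_mem_inter_or_xor_mem_sdiff hu hv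
  have hB₂ := cutRequirement_le_or_le hr (S := B) (T := B ∪ A) (T' := A \ B)
    fun _ hu _ hv => xor_mem_union_or_xor_mem_sdiff hu hv
  rw [inter_comm] at hB₁
  rw [union_comm] at hB₂
  simp only [← Nat.cast_le (α := ℤ)] at hA₁ hA₂ hB₁ hB₂
  exact add_le_add_or_add_le_add_of_le_or_le hA₁ hA₂ hB₁ hB₂
end

section
/- Let V be a finite set, E a finite multiset of edges on V (each edge an unordered pair of distinct vertices), L a laminar family of nonempty subsets of V with |L| = |E|, f : L → ℤ with f(S) ≥ 1 for all S ∈ L, and x : E → ℝ with 0 < x_e < 1/2 for all e such that x(δ(S)) = f(S) for every S ∈ L and the characteristic vectors χ(δ(S)), S ∈ L, are linearly independent in ℝ^E. For S ∈ L let α(S) be the number of sets of L contained in S (including S itself) and let β(S) be the number of edges of E with both endpoints in S. Then for every S ∈ L, f(S) ≥ α(S) − β(S). -/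
open Finset

/-- `δ(T)`: the indices of edges with exactly one endpoint in `T`. Edges are given as an
indexed family with endpoint maps `a b : ι → V`. -/
def cutEdges {V ι : Type*} [DecidableEq V] [Fintype ι] (a b : ι → V) (T : Finset V) :
    Finset ι :=
  Finset.univ.filter (fun i => ¬((a i ∈ T) ↔ (b i ∈ T)))

/-- `x(δ(T)) = Σ_{e ∈ δ(T)} x_e`. -/
def xCut {V ι : Type*} [DecidableEq V] [Fintype ι] (a b : ι → V) (x : ι → ℝ)
    (T : Finset V) : ℝ :=
  ∑ i ∈ cutEdges a b T, x i

/-- `χ(δ(T)) ∈ {0,1}^E`, the characteristic vector of `δ(T)`. -/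
def chiCut {V ι : Type*} [DecidableEq V] [Fintype ι] [DecidableEq ι] (a b : ι → V)
    (T : Finset V) : ι → ℝ :=
  fun i => if i ∈ cutEdges a b T then 1 else 0

/-- `α(S)`: the number of members of `L` contained in `S` (including `S` itself when
`S ∈ L`). -/
def alphaCount {V : Type*} [DecidableEq V] (L : Finset (Finset V)) (S : Finset V) : ℕ :=
  (L.filter (fun T => T ⊆ S)).card

/-- `β(S)`: the number of edges with both endpoints in `S`. -/
def betaCount {V ι : Type*} [DecidableEq V] [Fintype ι] (a b : ι → V)
    (S : Finset V) : ℕ :=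
  (Finset.univ.filter (fun i => a i ∈ S ∧ b i ∈ S)).card

/-!
Induct on `S ∈ L`. Let `C₁, …, Cₖ` be the children of `S` (the maximal members of `L` strictly
inside `S`) and `E(S)` (`ownEdges`) the edges inside `S` but inside no `Cⱼ`. Then
`α(S) = 1 + Σ α(Cⱼ)` and `β(S) = |E(S)| + Σ β(Cⱼ)`, so it suffices that
`f(S) - Σ f(Cⱼ) ≥ 1 - |E(S)|`.

With `d = χ(δ(S)) - Σ χ(δ(Cⱼ))` (`cutDefect`) we have `f(S) - Σ f(Cⱼ) = d · x`. By laminarity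
every edge cuts at most two children, and an edge cutting `S` cuts at most one, so `dₑ ≥ -2` and
`dₑ < 0` only for `e ∈ E(S)`. As `0 < xₑ < 1/2`, each term `dₑxₑ` is at least `-[dₑ < 0]`,
strictly so when `dₑ ≠ 0`; since `d ≠ 0` by linear independence, `d · x > -|E(S)|`, and
integrality of `f` finishes the proof.
-/

namespace LaminarCut

variable {V ι : Type*} [DecidableEq V]

def IsLaminar (L : Finset (Finset V)) : Prop :=
  ∀ S ∈ L, ∀ T ∈ L, Disjoint S T ∨ S ⊆ T ∨ T ⊆ S

def children (L : Finset (Finset V)) (S : Finset V) : Finset (Finset V) :=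
  {T ∈ L | T ⊂ S ∧ ∀ U ∈ L, U ⊂ S → ¬T ⊂ U}

variable {L : Finset (Finset V)} {S C C' : Finset V}

lemma mem_children :
    C ∈ children L S ↔ C ∈ L ∧ C ⊂ S ∧ ∀ U ∈ L, U ⊂ S → ¬C ⊂ U := by
  simp [children]

lemma exists_mem_children_superset {T : Finset V} (hT : T ∈ L) (hTS : T ⊂ S) :
    ∃ C ∈ children L S, T ⊆ C := by
  obtain ⟨C, hC, hmax⟩ := exists_max_image {U ∈ L | T ⊆ U ∧ U ⊂ S} card
    ⟨T, by simp [hT, hTS]⟩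
  simp only [mem_filter] at hC
  refine ⟨C, mem_children.2 ⟨hC.1, hC.2.2, fun U hU hUS hCU => ?_⟩, hC.2.1⟩
  exact (hmax U (by simp [hU, hUS, hC.2.1.trans hCU.subset])).not_gt (card_lt_card hCU)

lemma IsLaminar.disjoint_of_mem_children (hlam : IsLaminar L) (hC : C ∈ children L S)
    (hC' : C' ∈ children L S) (hne : C ≠ C') : Disjoint C C' := by
  obtain ⟨hCL, hCS, hCmax⟩ := mem_children.1 hC
  obtain ⟨hCL', hCS', hCmax'⟩ := mem_children.1 hC'
  rcases hlam C hCL C' hCL' with h | h | h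
  · exact h
  · exact absurd (h.ssubset_of_ne hne) (hCmax C' hCL' hCS')
  · exact absurd (h.ssubset_of_ne hne.symm) (hCmax' C hCL hCS)

lemma IsLaminar.card_children_filter_mem_le_one (hlam : IsLaminar L) (v : V) :
    #{C ∈ children L S | v ∈ C} ≤ 1 := by
  refine card_le_one.2 fun C hC C' hC' => ?_
  simp only [mem_filter] at hC hC'
  by_contra hne
  exact disjoint_left.1 (hlam.disjoint_of_mem_children hC.1 hC'.1 hne) hC.2 hC'.2

lemma IsLaminar.card_children_crossing_le_two (hlam : IsLaminar L) (u v : V) :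
    #{C ∈ children L S | ¬(u ∈ C ↔ v ∈ C)} ≤ 2 := by
  have hsub : {C ∈ children L S | ¬(u ∈ C ↔ v ∈ C)} ⊆
      {C ∈ children L S | u ∈ C} ∪ {C ∈ children L S | v ∈ C} := by
    intro C
    simp only [mem_filter, mem_union]
    tauto
  calc _ ≤ _ := card_le_card hsub
    _ ≤ _ := card_union_le _ _
    _ ≤ 1 + 1 := add_le_add (hlam.card_children_filter_mem_le_one (S := S) u)
        (hlam.card_children_filter_mem_le_one v)

lemma IsLaminar.card_children_crossing_le_one (hlam : IsLaminar L) (u : V) {v : V}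
    (hv : v ∉ S) : #{C ∈ children L S | ¬(u ∈ C ↔ v ∈ C)} ≤ 1 := by
  refine (card_le_card fun C hC => ?_).trans (hlam.card_children_filter_mem_le_one (S := S) u)
  simp only [mem_filter] at hC ⊢
  have hvC : v ∉ C := fun h => hv ((mem_children.1 hC.1).2.1.subset h)
  exact ⟨hC.1, by tauto⟩

lemma IsLaminar.children_crossing_eq_empty (hlam : IsLaminar L) (hC : C ∈ children L S)
    {u v : V} (hu : u ∈ C) (hv : v ∈ C) :
    {C' ∈ children L S | ¬(u ∈ C' ↔ v ∈ C')} = ∅ := by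
  refine filter_false_of_mem fun C' hC' hcross => ?_
  have hne : C ≠ C' := by rintro rfl; exact hcross (iff_of_true hu hv)
  have hdisj := disjoint_left.1 (hlam.disjoint_of_mem_children hC hC' hne)
  exact hcross (iff_of_false (hdisj hu) (hdisj hv))

lemma mem_or_mem_of_children_crossing_nonempty {u v : V}
    (h : {C ∈ children L S | ¬(u ∈ C ↔ v ∈ C)}.Nonempty) : u ∈ S ∨ v ∈ S := by
  obtain ⟨C, hC⟩ := h
  rw [mem_filter] at hC
  have hCS := (mem_children.1 hC.1).2.1.subset
  by_cases hu : u ∈ C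
  · exact Or.inl (hCS hu)
  · exact Or.inr (hCS (by tauto))

lemma alphaCount_eq_one_add_sum_children (hne : ∀ T ∈ L, T.Nonempty) (hlam : IsLaminar L)
    (hS : S ∈ L) : alphaCount L S = 1 + ∑ C ∈ children L S, alphaCount L C := by
  have hsplit : {T ∈ L | T ⊆ S} =
      insert S ((children L S).biUnion fun C => {T ∈ L | T ⊆ C}) := by
    ext T
    simp only [mem_filter, mem_insert, mem_biUnion]
    constructor
    · rintro ⟨hT, hTS⟩
      rcases eq_or_ne T S with rfl | hTS'
      · exact Or.inl rfl
      · obtain ⟨C, hC, hTC⟩ := exists_mem_children_superset hT (hTS.ssubset_of_ne hTS')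
        exact Or.inr ⟨C, hC, hT, hTC⟩
    · rintro (rfl | ⟨C, hC, hT, hTC⟩)
      · exact ⟨hS, subset_rfl⟩
      · exact ⟨hT, hTC.trans (mem_children.1 hC).2.1.subset⟩
  have hS_notMem : S ∉ (children L S).biUnion fun C => {T ∈ L | T ⊆ C} := by
    simp only [mem_biUnion, mem_filter, not_exists, not_and]
    exact fun C hC _ hSC => (hSC.trans_ssubset (mem_children.1 hC).2.1).ne rfl
  have hdisj : (children L S : Set (Finset V)).PairwiseDisjoint fun C => {T ∈ L | T ⊆ C} := by
    intro C hC C' hC' hCC'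
    refine disjoint_left.2 fun T hT hT' => ?_
    rw [mem_filter] at hT hT'
    obtain ⟨v, hv⟩ := hne T hT.1
    exact disjoint_left.1 (hlam.disjoint_of_mem_children hC hC' hCC') (hT.2 hv) (hT'.2 hv)
  rw [alphaCount, hsplit, card_insert_of_notMem hS_notMem, card_biUnion hdisj,
    add_comm]
  rfl

lemma neg_card_lt_dotProduct {ι : Type*} [Fintype ι] {d x : ι → ℝ} (hd : ∀ i, -2 ≤ d i)
    (hd0 : d ≠ 0) (hx : ∀ i, 0 < x i ∧ x i < 1 / 2) : -(#{i | d i < 0} : ℝ) < d ⬝ᵥ x := by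
  have hterm : ∀ i, d i ≠ 0 → -(if d i < 0 then 1 else 0 : ℝ) < d i * x i := by
    intro i hi
    obtain ⟨hx0, hx1⟩ := hx i
    split_ifs with hneg
    · nlinarith [mul_nonneg (neg_le_iff_add_nonneg.1 (hd i)) hx0.le]
    · have hpos : 0 < d i := lt_of_le_of_ne (not_lt.1 hneg) (Ne.symm hi)
      linarith [mul_pos hpos hx0]
  obtain ⟨j, hj⟩ := Function.ne_iff.1 hd0
  rw [natCast_card_filter, ← sum_neg_distrib]
  refine sum_lt_sum (fun i _ => ?_) ⟨j, mem_univ j, hterm j hj⟩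
  rcases eq_or_ne (d i) 0 with h | h
  · simp [h]
  · exact (hterm i h).le

section Edges

variable [Fintype ι] (a b : ι → V)

lemma mem_cutEdges {T : Finset V} {i : ι} : i ∈ cutEdges a b T ↔ ¬(a i ∈ T ↔ b i ∈ T) := by
  simp [cutEdges]

def insideEdges (S : Finset V) : Finset ι := {i | a i ∈ S ∧ b i ∈ S}

variable [DecidableEq ι]

def ownEdges (L : Finset (Finset V)) (S : Finset V) : Finset ι :=
  insideEdges a b S \ (children L S).biUnion (insideEdges a b)

lemma betaCount_eq_card_ownEdges_add_sum_children (hlam : IsLaminar L) :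
    betaCount a b S = #(ownEdges a b L S) + ∑ C ∈ children L S, betaCount a b C := by
  have hsub : (children L S).biUnion (insideEdges a b) ⊆ insideEdges a b S := by
    intro i hi
    obtain ⟨C, hC, hiC⟩ := mem_biUnion.1 hi
    simp only [insideEdges, mem_filter, mem_univ, true_and] at hiC ⊢
    have hCS := (mem_children.1 hC).2.1.subset
    exact ⟨hCS hiC.1, hCS hiC.2⟩
  have hdisj : (children L S : Set (Finset V)).PairwiseDisjoint (insideEdges a b) := by
    intro C hC C' hC' hCC'
    refine disjoint_left.2 fun i hi hi' => ?_
    simp only [insideEdges, mem_filter, mem_univ, true_and] at hi hi'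
    exact disjoint_left.1 (hlam.disjoint_of_mem_children hC hC' hCC') hi.1 hi'.1
  have hsplit := card_sdiff_add_card_eq_card hsub
  rw [card_biUnion hdisj] at hsplit
  exact hsplit.symm

lemma xCut_eq_chiCut_dotProduct (x : ι → ℝ) (T : Finset V) :
    xCut a b x T = chiCut a b T ⬝ᵥ x := by
  simp only [xCut, dotProduct, chiCut, ite_mul, one_mul, zero_mul, sum_ite_mem,
    univ_inter]

def cutDefect (L : Finset (Finset V)) (S : Finset V) : ι → ℝ :=
  chiCut a b S - ∑ C ∈ children L S, chiCut a b C

lemma cutDefect_apply (i : ι) :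
    cutDefect a b L S i = (if ¬(a i ∈ S ↔ b i ∈ S) then 1 else 0)
      - #{C ∈ children L S | ¬(a i ∈ C ↔ b i ∈ C)} := by
  simp only [cutDefect, Pi.sub_apply, Finset.sum_apply, chiCut, mem_cutEdges, sum_boole]

lemma IsLaminar.neg_two_le_cutDefect (hlam : IsLaminar L) (i : ι) :
    -2 ≤ cutDefect a b L S i := by
  have h := hlam.card_children_crossing_le_two (S := S) (a i) (b i)
  have h' : (#{C ∈ children L S | ¬(a i ∈ C ↔ b i ∈ C)} : ℝ) ≤ 2 := by exact_mod_cast h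
  rw [cutDefect_apply]
  split_ifs <;> linarith

lemma IsLaminar.mem_ownEdges_of_cutDefect_neg (hlam : IsLaminar L) {i : ι}
    (hi : cutDefect a b L S i < 0) : i ∈ ownEdges a b L S := by
  rw [cutDefect_apply] at hi
  set N := {C ∈ children L S | ¬(a i ∈ C ↔ b i ∈ C)} with hN_def
  have hN : N.Nonempty := by
    rw [nonempty_iff_ne_empty]
    intro h
    rw [h, card_empty, Nat.cast_zero, sub_zero] at hi
    split_ifs at hi <;> norm_num at hi
  by_cases hin : a i ∈ S ∧ b i ∈ S
  · simp only [ownEdges, insideEdges, mem_sdiff, mem_biUnion, mem_filter,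
      mem_univ, true_and, not_exists, not_and]
    exact ⟨hin, fun C hC ha hb => hN.ne_empty (hlam.children_crossing_eq_empty hC ha hb)⟩
  · have hcut : ¬(a i ∈ S ↔ b i ∈ S) := by
      have := mem_or_mem_of_children_crossing_nonempty hN
      tauto
    have hN_le : #N ≤ 1 := by
      by_cases hb : b i ∈ S
      · have ha : a i ∉ S := fun ha => hin ⟨ha, hb⟩
        simp_rw [hN_def, iff_comm (a := a i ∈ _)]
        exact hlam.card_children_crossing_le_one (b i) ha
      · exact hlam.card_children_crossing_le_one (a i) hb
    have hN_le' : (#N : ℝ) ≤ 1 := by exact_mod_cast hN_le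
    rw [if_pos hcut] at hi
    linarith

lemma cutDefect_ne_zero
    (hind : LinearIndependent ℝ (fun T : {T // T ∈ L} => chiCut a b T.val)) (hS : S ∈ L) :
    cutDefect a b L S ≠ 0 := by
  intro h
  have hspan : chiCut a b S ∈ Submodule.span ℝ
      ((fun T : {T // T ∈ L} => chiCut a b T.val) '' {T | T.val ∈ children L S}) := by
    rw [sub_eq_zero.1 h]
    exact Submodule.sum_mem _ fun C hC =>
      Submodule.subset_span ⟨⟨C, (mem_children.1 hC).1⟩, hC, rfl⟩
  exact hind.notMem_span_image (x := ⟨S, hS⟩) (fun hS' => (mem_children.1 hS').2.1.ne rfl) hspan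

lemma IsLaminar.one_sub_card_ownEdges_add_sum_children_le (hlam : IsLaminar L)
    {f : Finset V → ℤ} {x : ι → ℝ} (hx : ∀ i, 0 < x i ∧ x i < 1 / 2)
    (heq : ∀ T ∈ L, xCut a b x T = f T)
    (hind : LinearIndependent ℝ (fun T : {T // T ∈ L} => chiCut a b T.val)) (hS : S ∈ L) :
    1 - #(ownEdges a b L S) + ∑ C ∈ children L S, f C ≤ f S := by
  have hdot : ((f S - ∑ C ∈ children L S, f C : ℤ) : ℝ) = cutDefect a b L S ⬝ᵥ x := by
    rw [cutDefect, sub_dotProduct, sum_dotProduct, ← xCut_eq_chiCut_dotProduct, heq S hS]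
    push_cast
    congr 1
    refine sum_congr rfl fun C hC => ?_
    rw [← xCut_eq_chiCut_dotProduct, heq C (mem_children.1 hC).1]
  have hlt := neg_card_lt_dotProduct (hlam.neg_two_le_cutDefect a b)
    (cutDefect_ne_zero a b hind hS) hx
  rw [← hdot] at hlt
  have hlt' : -(#{i | cutDefect a b L S i < 0} : ℤ) < f S - ∑ C ∈ children L S, f C := by
    exact_mod_cast hlt
  have hcard : #{i | cutDefect a b L S i < 0} ≤ #(ownEdges a b L S) :=
    card_le_card fun i hi => hlam.mem_ownEdges_of_cutDefect_neg a b (mem_filter.1 hi).2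
  omega

end Edges

end LaminarCut

open LaminarCut

theorem stmt10_general {V ι : Type*} [DecidableEq V] [Fintype ι] [DecidableEq ι]
    (a b : ι → V)
    (L : Finset (Finset V))
    (hne : ∀ S ∈ L, S.Nonempty)
    (hlam : ∀ S ∈ L, ∀ T ∈ L, Disjoint S T ∨ S ⊆ T ∨ T ⊆ S)
    (f : Finset V → ℤ)
    (x : ι → ℝ) (hx : ∀ i, 0 < x i ∧ x i < 1 / 2)
    (heq : ∀ S ∈ L, xCut a b x S = f S)
    (hind : LinearIndependent ℝ (fun S : {T // T ∈ L} => chiCut a b S.val)) :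
    ∀ S ∈ L, (alphaCount L S : ℤ) - (betaCount a b S : ℤ) ≤ f S := by
  have hlam : IsLaminar L := hlam
  intro S
  induction S using strongInduction with
  | H S ih =>
    intro hS
    have hchildren : ∑ C ∈ children L S, ((alphaCount L C : ℤ) - betaCount a b C) ≤
        ∑ C ∈ children L S, f C :=
      sum_le_sum fun C hC => ih C (mem_children.1 hC).2.1 (mem_children.1 hC).1
    have hS_bound := hlam.one_sub_card_ownEdges_add_sum_children_le a b hx heq hind hS
    rw [sum_sub_distrib] at hchildren
    rw [alphaCount_eq_one_add_sum_children hne hlam hS,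
      betaCount_eq_card_ownEdges_add_sum_children a b hlam]
    push_cast
    linarith

/-- Under Jain's setup with `0 < x_e < 1/2` for all edges, every `S ∈ L` satisfies
`f(S) ≥ α(S) - β(S)`. -/
theorem stmt10 {V ι : Type*} [Fintype V] [DecidableEq V] [Fintype ι] [DecidableEq ι]
    (a b : ι → V) (hab : ∀ i, a i ≠ b i)
    (L : Finset (Finset V))
    (hne : ∀ S ∈ L, S.Nonempty)
    (hlam : ∀ S ∈ L, ∀ T ∈ L, Disjoint S T ∨ S ⊆ T ∨ T ⊆ S)
    (hcard : L.card = Fintype.card ι)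
    (f : Finset V → ℤ) (hf : ∀ S ∈ L, 1 ≤ f S)
    (x : ι → ℝ) (hx : ∀ i, 0 < x i ∧ x i < 1 / 2)
    (heq : ∀ S ∈ L, xCut a b x S = f S)
    (hind : LinearIndependent ℝ (fun S : {T // T ∈ L} => chiCut a b S.val)) :
    ∀ S ∈ L, (alphaCount L S : ℤ) - (betaCount a b S : ℤ) ≤ f S :=
  stmt10_general a b L hne hlam f x hx heq hind
end

section
/- Let V be a finite set, E a nonempty finite multiset of edges on V (each edge an unordered pair of distinct vertices), L a laminar family of nonempty subsets of V with |L| = |E|, f : L → ℤ with f(S) ≥ 1 for all S ∈ L, and x : E → ℝ with 0 < x_e < 1 for all e such that x(δ(S)) = f(S) for every S ∈ L and the characteristic vectors χ(δ(S)), S ∈ L, are linearly independent in ℝ^E. Then there exists an edge e ∈ E with x_e ≥ 1/2. -/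
/-!
Jain's token argument. Suppose every edge has `x e < 1/2`. Each edge `e = uv` hands out one
token: `x e` to the smallest member of `L` containing `u`, `x e` to the smallest containing `v`,
and `1 - 2 x e` to the smallest containing both. The tokens received by `S ∈ L` add up to
`x(δ(S)) - Σ x(δ(C))` over the children `C` of `S`, plus an integer, i.e. to an integer; they are
nonnegative, and they cannot all vanish, since then `χ(δ(S)) = Σ χ(δ(C))`, against linear
independence. So every `S` receives at least one token, while the `|E| = |L|` edges hand out at
most one token each. But an edge crossing a maximal member of `L` has no member containing both
endpoints, so its share `1 - 2 x e > 0` is never handed out.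
-/

open Finset

lemma LinearIndependent.ne_sum_of_notMem {α R M : Type*} [Semiring R] [Nontrivial R]
    [AddCommMonoid M] [Module R M] {L s : Finset α} {v : α → M}
    (hv : LinearIndependent R (fun T : {T // T ∈ L} => v T)) {S : α} (hS : S ∈ L)
    (hs : s ⊆ L) (hSs : S ∉ s) : v S ≠ ∑ T ∈ s, v T := by
  intro h
  refine hv.notMem_span_image (s := {T | T.val ∈ s}) (x := ⟨S, hS⟩) hSs ?_
  rw [h]
  exact Submodule.sum_mem _ fun T hT => Submodule.subset_span ⟨⟨T, hs hT⟩, hT, rfl⟩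

namespace Laminar

variable {V : Type*} [DecidableEq V]

def IsLaminar (L : Finset (Finset V)) : Prop :=
  ∀ S ∈ L, ∀ T ∈ L, Disjoint S T ∨ S ⊆ T ∨ T ⊆ S

def children (L : Finset (Finset V)) (S : Finset V) : Finset (Finset V) :=
  L.filter fun C => C ⊂ S ∧ ∀ T ∈ L, T ⊂ S → C ⊆ T → T ⊆ C

variable {L : Finset (Finset V)} {S T C D W : Finset V}

lemma mem_children : C ∈ children L S ↔ Maximal (· ∈ L.filter (· ⊂ S)) C := by
  simp [children, Maximal, and_assoc, and_imp]

lemma mem_of_mem_children (hC : C ∈ children L S) : C ∈ L :=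
  (mem_filter.1 hC).1

lemma ssubset_of_mem_children (hC : C ∈ children L S) : C ⊂ S :=
  (mem_filter.1 hC).2.1

lemma exists_mem_children_superset (hT : T ∈ L) (hTS : T ⊂ S) :
    ∃ C ∈ children L S, T ⊆ C := by
  obtain ⟨C, hTC, hC⟩ := (L.filter (· ⊂ S)).exists_le_maximal (mem_filter.2 ⟨hT, hTS⟩)
  exact ⟨C, mem_children.2 hC, hTC⟩

lemma disjoint_of_mem_children (hL : IsLaminar L) (hC : C ∈ children L S)
    (hD : D ∈ children L S) (hCD : C ≠ D) : Disjoint C D := by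
  have hC' := mem_children.1 hC
  have hD' := mem_children.1 hD
  rcases hL C (mem_of_mem_children hC) D (mem_of_mem_children hD) with h | h | h
  · exact h
  · exact absurd (hC'.eq_of_le hD'.prop h) hCD
  · exact absurd (hD'.eq_of_ge hC'.prop h) hCD

lemma card_filter_children_le_one (hL : IsLaminar L) (hW : W.Nonempty) :
    #{C ∈ children L S | W ⊆ C} ≤ 1 := by
  obtain ⟨v, hv⟩ := hW
  refine card_le_one.2 fun C hC D hD => by_contra fun hCD => ?_
  rw [mem_filter] at hC hD
  exact disjoint_left.1 (disjoint_of_mem_children hL hC.1 hD.1 hCD) (hC.2 hv) (hD.2 hv)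

/-- For nonempty `W` and `S ∈ L` this says that `S` is the smallest member of `L` containing
`W`; phrased through the children, its indicator is linear in those of `W ⊆ S` and `W ⊆ C`. -/
def Owns (L : Finset (Finset V)) (S W : Finset V) : Prop :=
  W ⊆ S ∧ ∀ C ∈ children L S, ¬W ⊆ C

instance : Decidable (Owns L S W) := by
  unfold Owns
  infer_instance

lemma Owns.eq (hL : IsLaminar L) (hW : W.Nonempty) (hS : S ∈ L) (hT : T ∈ L)
    (hSW : Owns L S W) (hTW : Owns L T W) : S = T := by
  have not_ssubset : ∀ {S T}, S ∈ L → Owns L S W → Owns L T W → ¬S ⊂ T := by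
    intro S T hS hSW hTW hST
    obtain ⟨C, hC, hSC⟩ := exists_mem_children_superset hS hST
    exact hTW.2 C hC (hSW.1.trans hSC)
  obtain ⟨v, hv⟩ := hW
  rcases hL S hS T hT with h | h | h
  · exact absurd (hTW.1 hv) (disjoint_left.1 h (hSW.1 hv))
  · exact h.eq_or_ssubset.resolve_right (not_ssubset hS hSW hTW)
  · exact (h.eq_or_ssubset.resolve_right (not_ssubset hT hTW hSW)).symm

lemma sum_ite_owns_le_one (hL : IsLaminar L) (hW : W.Nonempty) :
    ∑ S ∈ L, (if Owns L S W then 1 else 0 : ℝ) ≤ 1 := by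
  rw [sum_boole]
  refine Nat.cast_le_one.2 (card_le_one.2 fun S hS T hT => ?_)
  rw [mem_filter] at hS hT
  exact hS.2.eq hL hW hS.1 hT.1 hT.2

lemma ite_subset_sub_sum_children (hL : IsLaminar L) (hW : W.Nonempty) :
    ((if W ⊆ S then 1 else 0 : ℝ) - ∑ C ∈ children L S, if W ⊆ C then 1 else 0)
      = if Owns L S W then 1 else 0 := by
  rw [sum_boole]
  by_cases hown : ∀ C ∈ children L S, ¬W ⊆ C
  · simp [Owns, and_iff_left hown, filter_false_of_mem hown]
  · push Not at hown
    obtain ⟨C, hC, hWC⟩ := hown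
    have hWS : W ⊆ S := hWC.trans (ssubset_of_mem_children hC).subset
    have hone : #{C ∈ children L S | W ⊆ C} = 1 :=
      (card_filter_children_le_one hL hW).antisymm (card_pos.2 ⟨C, mem_filter.2 ⟨hC, hWC⟩⟩)
    rw [if_pos hWS, if_neg fun h => h.2 C hC hWC, hone, Nat.cast_one, sub_self]

variable {ι : Type*} {a b : ι → V} {x : ι → ℝ} {i : ι}

def token (a b : ι → V) (L : Finset (Finset V)) (x : ι → ℝ) (i : ι) (S : Finset V) : ℝ :=
  x i * (if Owns L S {a i} then 1 else 0) + x i * (if Owns L S {b i} then 1 else 0)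
    + (1 - 2 * x i) * if Owns L S {a i, b i} then 1 else 0

lemma token_nonneg (hx : 0 < x i ∧ x i < 1 / 2) : 0 ≤ token a b L x i S := by
  have : 0 ≤ 1 - 2 * x i := by linarith [hx.2]
  unfold token
  split_ifs <;> linarith [hx.1]

lemma sum_token_le (hL : IsLaminar L) (hx : 0 < x i ∧ x i < 1 / 2) :
    ∑ S ∈ L, token a b L x i S
      ≤ 2 * x i + (1 - 2 * x i) * ∑ S ∈ L, if Owns L S {a i, b i} then 1 else 0 := by
  simp only [token, sum_add_distrib, ← mul_sum]
  have ha := sum_ite_owns_le_one hL (singleton_nonempty (a i))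
  have hb := sum_ite_owns_le_one hL (singleton_nonempty (b i))
  nlinarith [hx.1]

lemma sum_token_le_one (hL : IsLaminar L) (hx : 0 < x i ∧ x i < 1 / 2) :
    ∑ S ∈ L, token a b L x i S ≤ 1 := by
  have hab := sum_ite_owns_le_one hL (insert_nonempty (a i) {b i})
  refine (sum_token_le hL hx).trans ?_
  nlinarith [hx.2]

lemma sum_token_lt_one (hL : IsLaminar L) (hx : 0 < x i ∧ x i < 1 / 2)
    (hi : ∀ S ∈ L, ¬{a i, b i} ⊆ S) : ∑ S ∈ L, token a b L x i S < 1 := by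
  have hab : ∑ S ∈ L, (if Owns L S {a i, b i} then 1 else 0 : ℝ) = 0 :=
    sum_eq_zero fun S hS => if_neg fun h => hi S hS h.1
  refine (sum_token_le hL hx).trans_lt ?_
  rw [hab, mul_zero, add_zero]
  linarith [hx.2]

variable [Fintype ι]

lemma forall_not_subset_of_mem_cutEdges (hL : IsLaminar L) {M : Finset V}
    (hM : Maximal (· ∈ L) M) (hi : i ∈ cutEdges a b M) : ∀ S ∈ L, ¬{a i, b i} ⊆ S := by
  intro S hS habS
  rw [insert_subset_iff, singleton_subset_iff] at habS
  have hcut : ¬(a i ∈ M ↔ b i ∈ M) := (mem_filter.1 hi).2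
  rcases hL S hS M hM.prop with h | h | h
  · by_cases ha : a i ∈ M
    · exact disjoint_left.1 h habS.1 ha
    · exact disjoint_left.1 h habS.2 (by tauto)
  · exact hcut (iff_of_true (h habS.1) (h habS.2))
  · have hSM := hM.2 hS h
    exact hcut (iff_of_true (hSM habS.1) (hSM habS.2))

variable [DecidableEq ι]

lemma chiCut_apply (a b : ι → V) (T : Finset V) (i : ι) :
    chiCut a b T i = (if {a i} ⊆ T then 1 else 0) + (if {b i} ⊆ T then 1 else 0)
      - 2 * if {a i, b i} ⊆ T then 1 else 0 := by
  by_cases ha : a i ∈ T <;> by_cases hb : b i ∈ T <;>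
    simp [chiCut, cutEdges, insert_subset_iff, ha, hb, one_add_one_eq_two]

lemma sum_chiCut_mul (a b : ι → V) (x : ι → ℝ) (T : Finset V) :
    ∑ i, chiCut a b T i * x i = xCut a b x T := by
  simp [chiCut, xCut, ite_mul, sum_ite_mem]

lemma chiCut_sub_sum_children (hL : IsLaminar L) (S : Finset V) (i : ι) :
    chiCut a b S i - ∑ C ∈ children L S, chiCut a b C i
      = (if Owns L S {a i} then 1 else 0) + (if Owns L S {b i} then 1 else 0)
        - 2 * if Owns L S {a i, b i} then 1 else 0 := by
  simp only [chiCut_apply, sum_add_distrib, sum_sub_distrib, ← mul_sum]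
  rw [← ite_subset_sub_sum_children hL (singleton_nonempty (a i)),
    ← ite_subset_sub_sum_children hL (singleton_nonempty (b i)),
    ← ite_subset_sub_sum_children hL (insert_nonempty (a i) {b i})]
  ring

lemma token_eq (hL : IsLaminar L) :
    token a b L x i S = x i * (chiCut a b S i - ∑ C ∈ children L S, chiCut a b C i)
      + if Owns L S {a i, b i} then 1 else 0 := by
  rw [chiCut_sub_sum_children hL, token]
  ring

lemma chiCut_eq_sum_children_of_token_eq_zero (hL : IsLaminar L) (hx : 0 < x i ∧ x i < 1 / 2)
    (h : token a b L x i S = 0) : chiCut a b S i = ∑ C ∈ children L S, chiCut a b C i := by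
  rw [← sub_eq_zero, chiCut_sub_sum_children hL]
  unfold token at h
  split_ifs at h ⊢ <;> linarith [hx.1, hx.2]

lemma sum_token_eq (hL : IsLaminar L) (S : Finset V) :
    ∑ i, token a b L x i S = xCut a b x S - ∑ C ∈ children L S, xCut a b x C
      + #{i | Owns L S {a i, b i}} := by
  simp only [token_eq hL, sum_add_distrib, sum_boole, mul_sub, sum_sub_distrib, mul_sum]
  rw [sum_comm]
  simp only [mul_comm (x _), sum_chiCut_mul]

lemma one_le_sum_token (hL : IsLaminar L) (hx : ∀ i, 0 < x i ∧ x i < 1 / 2)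
    {f : Finset V → ℤ} (heq : ∀ S ∈ L, xCut a b x S = f S)
    (hind : LinearIndependent ℝ (fun S : {T // T ∈ L} => chiCut a b S.val)) (hS : S ∈ L) :
    1 ≤ ∑ i, token a b L x i S := by
  have hnonneg : ∀ i ∈ univ, 0 ≤ token a b L x i S := fun i _ => token_nonneg (hx i)
  have hpos : 0 < ∑ i, token a b L x i S := by
    refine (sum_nonneg hnonneg).lt_of_ne fun h => ?_
    refine hind.ne_sum_of_notMem hS (fun C hC => mem_of_mem_children hC)
      (fun hSS => (ssubset_of_mem_children hSS).ne rfl) (funext fun i => ?_)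
    rw [Finset.sum_apply]
    exact chiCut_eq_sum_children_of_token_eq_zero hL (hx i)
      ((sum_eq_zero_iff_of_nonneg hnonneg).1 h.symm i (mem_univ i))
  have hint : ∑ i, token a b L x i S
      = ((f S - ∑ C ∈ children L S, f C + #{i | Owns L S {a i, b i}} : ℤ) : ℝ) := by
    rw [sum_token_eq hL, heq S hS, sum_congr rfl fun C hC => heq C (mem_of_mem_children hC)]
    push_cast
    ring
  rw [hint] at hpos ⊢
  exact_mod_cast (Int.cast_pos.1 hpos : (0 : ℤ) < _)

end Laminar

open Laminar in
theorem stmt11_general {V ι : Type*} [DecidableEq V] [Fintype ι] [DecidableEq ι]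
    [Nonempty ι]
    (a b : ι → V)
    (L : Finset (Finset V))
    (hlam : ∀ S ∈ L, ∀ T ∈ L, Disjoint S T ∨ S ⊆ T ∨ T ⊆ S)
    (hcard : L.card = Fintype.card ι)
    (f : Finset V → ℤ) (hf : ∀ S ∈ L, 1 ≤ f S)
    (x : ι → ℝ) (hx : ∀ i, 0 < x i ∧ x i < 1)
    (heq : ∀ S ∈ L, xCut a b x S = f S)
    (hind : LinearIndependent ℝ (fun S : {T // T ∈ L} => chiCut a b S.val)) :
    ∃ i : ι, (1 : ℝ) / 2 ≤ x i := by
  by_contra! hsmall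
  have hx' : ∀ i, 0 < x i ∧ x i < 1 / 2 := fun i => ⟨(hx i).1, hsmall i⟩
  obtain ⟨M, hM⟩ := exists_maximal (card_pos.1 (hcard ▸ Fintype.card_pos))
  obtain ⟨i₀, hi₀⟩ : (cutEdges a b M).Nonempty := by
    refine nonempty_of_sum_ne_zero (f := x) ?_
    rw [← xCut, heq M hM.prop]
    exact_mod_cast (zero_lt_one.trans_le (hf M hM.prop)).ne'
  have hlower : (Fintype.card ι : ℝ) ≤ ∑ S ∈ L, ∑ i, token a b L x i S := by
    rw [← hcard, card_eq_sum_ones, Nat.cast_sum, Nat.cast_one]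
    exact sum_le_sum fun S hS => one_le_sum_token hlam hx' heq hind hS
  have hupper : ∑ S ∈ L, ∑ i, token a b L x i S < Fintype.card ι := by
    rw [sum_comm, Fintype.card_eq_sum_ones, Nat.cast_sum, Nat.cast_one]
    exact sum_lt_sum (fun i _ => sum_token_le_one hlam (hx' i)) ⟨i₀, mem_univ i₀,
      sum_token_lt_one hlam (hx' i₀) (forall_not_subset_of_mem_cutEdges hlam hM hi₀)⟩
  linarith

/-- Jain's key counting theorem: given a nonempty multiset `E` of edges, a laminar family
`L` of nonempty sets with `|L| = |E|`, requirements `f(S) ≥ 1`, and a fully fractional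
`x` with `x(δ(S)) = f(S)` for all `S ∈ L` and `χ(δ(S))`, `S ∈ L`, linearly independent,
some edge has `x_e ≥ 1/2`. -/
theorem stmt11 {V ι : Type*} [Fintype V] [DecidableEq V] [Fintype ι] [DecidableEq ι]
    [Nonempty ι]
    (a b : ι → V) (hab : ∀ i, a i ≠ b i)
    (L : Finset (Finset V))
    (hne : ∀ S ∈ L, S.Nonempty)
    (hlam : ∀ S ∈ L, ∀ T ∈ L, Disjoint S T ∨ S ⊆ T ∨ T ⊆ S)
    (hcard : L.card = Fintype.card ι)
    (f : Finset V → ℤ) (hf : ∀ S ∈ L, 1 ≤ f S)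
    (x : ι → ℝ) (hx : ∀ i, 0 < x i ∧ x i < 1)
    (heq : ∀ S ∈ L, xCut a b x S = f S)
    (hind : LinearIndependent ℝ (fun S : {T // T ∈ L} => chiCut a b S.val)) :
    ∃ i : ι, (1 : ℝ) / 2 ≤ x i :=
  stmt11_general a b L hlam hcard f hf x hx heq hind
end

section
/- Let V be a finite set, E a finite multiset of edges on V (each edge an unordered pair of distinct vertices), and let f : 2^V → ℤ be a skew-supermodular function that is non-trivial (there exists S ⊊ V, S ≠ ∅, with f(S) > 0). Consider the polytope P = { x ∈ ℝ^E : 0 ≤ x_e ≤ 1 for all e ∈ E, and Σ_{e ∈ δ(S)} x_e ≥ f(S) for all S ⊆ V }. If x̄ is an extreme point of P, then there exists an edge e ∈ E with x̄_e ≥ 1/2. -/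
open Finset

/-!
Suppose every coordinate of the extreme point `x` is below `1/2`, and let `F` be its support.
The tight constraints span `ℝ^ι`; since skew-supermodularity lets two crossing tight sets be
uncrossed into two tight sets with the same total cut vector, the tight cut constraints are
spanned by those of a laminar family `L` of tight sets whose cut vectors, restricted to `F`, are
linearly independent. Hence `|F| ≤ |L|`.

A token count gives `|L| < |F|`. Each edge `i ∈ F` hands `x i` to the smallest member of `L`
containing each of its endpoints and `1 - 2 x i` to the smallest member containing both. A member
`S` then receives `x(δ S) - ∑ x(δ R)` over its children `R`, plus an integer number of whole
tokens: an integer, positive by independence, hence at least `1`. Every edge hands out at most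
`1`, and an edge leaving a maximal member of `L` strictly less.
-/

namespace Jain

open Classical in
noncomputable def ind (p : Prop) : ℝ := if p then 1 else 0

theorem ind_of_pos {p : Prop} (h : p) : ind p = 1 := if_pos h

theorem ind_of_neg {p : Prop} (h : ¬p) : ind p = 0 := if_neg h

theorem ind_nonneg (p : Prop) : 0 ≤ ind p := by
  unfold ind; split <;> norm_num

theorem ind_le_one (p : Prop) : ind p ≤ 1 := by
  unfold ind; split <;> norm_num

theorem sum_ind_eq_ind_exists {α : Type*} (s : Finset α) {p : α → Prop}
    (hp : ∀ a ∈ s, ∀ b ∈ s, p a → p b → a = b) :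
    ∑ a ∈ s, ind (p a) = ind (∃ a ∈ s, p a) := by
  by_cases h : ∃ a ∈ s, p a
  · obtain ⟨a, ha, hpa⟩ := h
    rw [ind_of_pos ⟨a, ha, hpa⟩, Finset.sum_eq_single_of_mem a ha, ind_of_pos hpa]
    exact fun b hb hba => ind_of_neg fun hpb => hba (hp b hb a ha hpb hpa)
  · push Not at h
    rw [ind_of_neg (by simpa using h)]
    exact Finset.sum_eq_zero fun a ha => ind_of_neg (h a ha)

section Laminar

variable {V : Type*}

def Crosses (A B : Finset V) : Prop := ¬Disjoint A B ∧ ¬A ⊆ B ∧ ¬B ⊆ A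

def IsLaminar (L : Finset (Finset V)) : Prop := ∀ A ∈ L, ∀ B ∈ L, ¬Crosses A B

theorem Crosses.symm {A B : Finset V} (h : Crosses A B) : Crosses B A :=
  ⟨fun h' => h.1 h'.symm, h.2.2, h.2.1⟩

theorem not_crosses_iff {A B : Finset V} : ¬Crosses A B ↔ A ⊆ B ∨ B ⊆ A ∨ Disjoint A B := by
  unfold Crosses; tauto

theorem IsLaminar.subset_or_subset {L : Finset (Finset V)} (hL : IsLaminar L) {A B : Finset V}
    (hA : A ∈ L) (hB : B ∈ L) (hAB : ¬Disjoint A B) : A ⊆ B ∨ B ⊆ A := by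
  have := not_crosses_iff.1 (hL A hA B hB)
  tauto

theorem IsLaminar.mono {L L' : Finset (Finset V)} (hL : IsLaminar L) (h : L' ⊆ L) :
    IsLaminar L' :=
  fun A hA B hB => hL A (h hA) B (h hB)

def IsMinCover (L : Finset (Finset V)) (X S : Finset V) : Prop :=
  S ∈ L ∧ X ⊆ S ∧ ∀ W ∈ L, X ⊆ W → S ⊆ W

theorem IsMinCover.unique {L : Finset (Finset V)} {X S S' : Finset V} (h : IsMinCover L X S)
    (h' : IsMinCover L X S') : S = S' :=
  Subset.antisymm (h.2.2 S' h'.1 h'.2.1) (h'.2.2 S h.1 h.2.1)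

variable [DecidableEq V]

instance (A B : Finset V) : Decidable (Crosses A B) := by
  unfold Crosses; infer_instance

theorem IsLaminar.insert {L : Finset (Finset V)} (hL : IsLaminar L) {S : Finset V}
    (hS : ∀ W ∈ L, ¬Crosses W S) : IsLaminar (insert S L) := by
  simp only [IsLaminar, mem_insert, forall_eq_or_imp]
  exact ⟨⟨fun h => h.2.1 subset_rfl, fun B hB h => hS B hB h.symm⟩,
    fun A hA => ⟨hS A hA, hL A hA⟩⟩

theorem not_crosses_inter_right (S W : Finset V) : ¬Crosses W (S ∩ W) :=
  not_crosses_iff.2 (Or.inr (Or.inl inter_subset_right))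

theorem not_crosses_union_right (S W : Finset V) : ¬Crosses W (S ∪ W) :=
  not_crosses_iff.2 (Or.inl subset_union_right)

theorem not_crosses_sdiff_left (S W : Finset V) : ¬Crosses W (S \ W) :=
  not_crosses_iff.2 (Or.inr (Or.inr disjoint_sdiff))

theorem not_crosses_sdiff_right (S W : Finset V) : ¬Crosses W (W \ S) :=
  not_crosses_iff.2 (Or.inr (Or.inl sdiff_subset))

theorem Crosses.of_crosses_inter {S W W' : Finset V} (hW' : ¬Crosses W' W)
    (h : Crosses W' (S ∩ W)) : Crosses W' S := by
  simp only [Crosses, disjoint_left, subset_iff, mem_inter] at *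
  grind

theorem Crosses.of_crosses_union {S W W' : Finset V} (hSW : Crosses S W) (hW' : ¬Crosses W' W)
    (h : Crosses W' (S ∪ W)) : Crosses W' S := by
  simp only [Crosses, disjoint_left, subset_iff, mem_union] at *
  grind

theorem Crosses.of_crosses_sdiff_left {S W W' : Finset V} (hSW : Crosses S W)
    (hW' : ¬Crosses W' W) (h : Crosses W' (S \ W)) : Crosses W' S := by
  simp only [Crosses, disjoint_left, subset_iff, mem_sdiff] at *
  grind

theorem Crosses.of_crosses_sdiff_right {S W W' : Finset V} (hSW : Crosses S W)
    (hW' : ¬Crosses W' W) (h : Crosses W' (W \ S)) : Crosses W' S := by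
  simp only [Crosses, disjoint_left, subset_iff, mem_sdiff] at *
  grind

def crossNum (L : Finset (Finset V)) (S : Finset V) : ℕ := #{W ∈ L | Crosses W S}

theorem crossNum_lt {L : Finset (Finset V)} (hL : IsLaminar L) {S W C : Finset V} (hW : W ∈ L)
    (hWS : Crosses W S) (hWC : ¬Crosses W C)
    (hC : ∀ W', ¬Crosses W' W → Crosses W' C → Crosses W' S) : crossNum L C < crossNum L S := by
  refine Finset.card_lt_card ⟨fun W' hW' => ?_, fun h => hWC (mem_filter.1 (h ?_)).2⟩
  · obtain ⟨hW'L, hW'C⟩ := mem_filter.1 hW'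
    exact mem_filter.2 ⟨hW'L, hC W' (hL W' hW'L W hW) hW'C⟩
  · exact mem_filter.2 ⟨hW, hWS⟩

def children (L : Finset (Finset V)) (S : Finset V) : Finset (Finset V) :=
  {R ∈ L | R ⊂ S ∧ ∀ W ∈ L, R ⊂ W → ¬W ⊂ S}

variable {L : Finset (Finset V)}

theorem exists_mem_children_superset {S W : Finset V} (hW : W ∈ L) (hWS : W ⊂ S) :
    ∃ R ∈ children L S, W ⊆ R := by
  obtain ⟨R, hR, hRmax⟩ := exists_max_image {R ∈ L | W ⊆ R ∧ R ⊂ S} card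
    ⟨W, mem_filter.2 ⟨hW, subset_rfl, hWS⟩⟩
  obtain ⟨hRL, hWR, hRS⟩ := mem_filter.1 hR
  refine ⟨R, mem_filter.2 ⟨hRL, hRS, fun W' hW'L hRW' hW'S => ?_⟩, hWR⟩
  have := hRmax W' (mem_filter.2 ⟨hW'L, hWR.trans hRW'.subset, hW'S⟩)
  exact (card_lt_card hRW').not_ge this

theorem IsLaminar.disjoint_of_mem_children (hL : IsLaminar L) {S R R' : Finset V}
    (hR : R ∈ children L S) (hR' : R' ∈ children L S) (hne : R ≠ R') : Disjoint R R' := by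
  obtain ⟨hRL, hRS, hRmax⟩ := mem_filter.1 hR
  obtain ⟨hR'L, hR'S, hR'max⟩ := mem_filter.1 hR'
  rcases not_crosses_iff.1 (hL R hRL R' hR'L) with h | h | h
  · exact absurd hR'S (hRmax R' hR'L (Finset.ssubset_iff_subset_ne.2 ⟨h, hne⟩))
  · exact absurd hRS (hR'max R hRL (Finset.ssubset_iff_subset_ne.2 ⟨h, hne.symm⟩))
  · exact h

theorem IsLaminar.isMinCover_iff (hL : IsLaminar L) {X S : Finset V} (hS : S ∈ L)
    (hX : X.Nonempty) : IsMinCover L X S ↔ X ⊆ S ∧ ¬∃ R ∈ children L S, X ⊆ R := by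
  refine ⟨fun ⟨_, hXS, hmin⟩ => ⟨hXS, fun ⟨R, hR, hXR⟩ => ?_⟩, fun ⟨hXS, hnot⟩ => ⟨hS, hXS, ?_⟩⟩
  · obtain ⟨hRL, hRS, -⟩ := mem_filter.1 hR
    exact hRS.not_subset (hmin R hRL hXR)
  · intro W hW hXW
    have hSW : ¬Disjoint S W := fun h => hX.ne_empty (disjoint_self.1 (h.mono hXS hXW))
    refine (hL.subset_or_subset hS hW hSW).elim id fun hWS => ?_
    rcases eq_or_ne W S with rfl | hne
    · exact subset_rfl
    obtain ⟨R, hR, hWR⟩ := exists_mem_children_superset hW (ssubset_of_subset_of_ne hWS hne)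
    exact absurd ⟨R, hR, hXW.trans hWR⟩ hnot

theorem IsLaminar.ind_isMinCover (hL : IsLaminar L) {X S : Finset V} (hS : S ∈ L)
    (hX : X.Nonempty) :
    ind (IsMinCover L X S) = ind (X ⊆ S) - ∑ R ∈ children L S, ind (X ⊆ R) := by
  have hsum : ∑ R ∈ children L S, ind (X ⊆ R) = ind (∃ R ∈ children L S, X ⊆ R) :=
    sum_ind_eq_ind_exists _ fun R hR R' hR' hXR hXR' => by_contra fun hne =>
      hX.ne_empty (disjoint_self.1 ((hL.disjoint_of_mem_children hR hR' hne).mono hXR hXR'))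
  have hchild : (∃ R ∈ children L S, X ⊆ R) → X ⊆ S :=
    fun ⟨R, hR, hXR⟩ => hXR.trans (mem_filter.1 hR).2.1.subset
  rw [hsum]
  by_cases h : ∃ R ∈ children L S, X ⊆ R
  · simp [ind, hL.isMinCover_iff hS hX, h, hchild h]
  · by_cases hXS : X ⊆ S <;> simp [ind, hL.isMinCover_iff hS hX, h, hXS]

end Laminar

open Filter Topology in
theorem span_tight_rows_eq_top_of_mem_extremePoints {n m : Type*} [Fintype n] [Finite m]
    {A : m → n → ℝ} {β : m → ℝ} {x : n → ℝ}
    (hx : x ∈ Set.extremePoints ℝ {y | ∀ j, β j ≤ A j ⬝ᵥ y}) :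
    Submodule.span ℝ (A '' {j | A j ⬝ᵥ x = β j}) = ⊤ := by
  classical
  -- a direction `d` orthogonal to every tight row keeps `x ± t • d` in the polyhedron for small `t`
  by_contra hne
  obtain ⟨φ, hφ, hker⟩ := Submodule.exists_le_ker_of_lt_top _ (lt_top_iff_ne_top.2 hne)
  set d : n → ℝ := fun i => φ (Pi.single i 1)
  have hφd : ∀ v, φ v = v ⬝ᵥ d := fun v => by
    conv_lhs => rw [pi_eq_sum_univ' v]
    simp [dotProduct, d]
  have hd : d ≠ 0 := fun h => hφ (LinearMap.ext fun v => by simp [hφd, h])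
  have htight : ∀ j, A j ⬝ᵥ x = β j → A j ⬝ᵥ d = 0 := fun j hj => by
    rw [← hφd]
    exact hker (Submodule.subset_span ⟨j, hj, rfl⟩)
  have hnear : ∀ᶠ t in 𝓝 (0 : ℝ), x + t • d ∈ {y | ∀ j, β j ≤ A j ⬝ᵥ y} := by
    refine eventually_all.2 fun j => ?_
    simp only [dotProduct_add, dotProduct_smul, smul_eq_mul]
    rcases (hx.1 j).eq_or_lt with h | h
    · exact .of_forall fun t => by simp [htight j h.symm, h]
    · have : Tendsto (fun t : ℝ => A j ⬝ᵥ x + t * A j ⬝ᵥ d) (𝓝 0) (𝓝 (A j ⬝ᵥ x)) :=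
        Continuous.tendsto' (by fun_prop) _ _ (by simp)
      exact (this.eventually (lt_mem_nhds h)).mono fun _ => le_of_lt
  have hnear' : ∀ᶠ t in 𝓝 (0 : ℝ), x + (-t) • d ∈ {y | ∀ j, β j ≤ A j ⬝ᵥ y} :=
    (continuous_neg.tendsto' 0 0 neg_zero).eventually hnear
  obtain ⟨t, ⟨hp, hm⟩, ht⟩ :=
    (((hnear.and hnear').filter_mono nhdsWithin_le_nhds).and
      (self_mem_nhdsWithin (s := Set.Ioi 0))).exists
  have hseg : x ∈ openSegment ℝ (x + t • d) (x + (-t) • d) :=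
    ⟨1 / 2, 1 / 2, by norm_num, by norm_num, by norm_num, by module⟩
  have := hx.2 hp hm hseg
  exact hd (by simpa [ne_of_gt ht] using this)

section Cuts

variable {V ι : Type*} [DecidableEq V] [Fintype ι] (a b : ι → V)

theorem ind_mem_cutEdges (S : Finset V) (i : ι) :
    ind (i ∈ cutEdges a b S) =
      ind ({a i} ⊆ S) + ind ({b i} ⊆ S) - 2 * ind ({a i, b i} ⊆ S) := by
  simp only [cutEdges, mem_filter, mem_univ, true_and, singleton_subset_iff, insert_subset_iff]
  by_cases ha : a i ∈ S <;> by_cases hb : b i ∈ S <;> simp [ind, ha, hb, one_add_one_eq_two]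

noncomputable def cutVec (S : Finset V) : ι → ℝ := fun i => ind (i ∈ cutEdges a b S)

theorem cutVec_dotProduct (S : Finset V) (x : ι → ℝ) :
    cutVec a b S ⬝ᵥ x = ∑ i ∈ cutEdges a b S, x i := by
  rw [cutEdges, sum_filter]
  refine sum_congr rfl fun i _ => ?_
  simp [cutVec, cutEdges, ind]

theorem cutVec_inter_add_cutVec_union_le (A B : Finset V) :
    cutVec a b (A ∩ B) + cutVec a b (A ∪ B) ≤ cutVec a b A + cutVec a b B := by
  intro i
  simp only [Pi.add_apply, cutVec, cutEdges, mem_filter, mem_univ, true_and, mem_inter,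
    mem_union]
  by_cases h1 : a i ∈ A <;> by_cases h2 : a i ∈ B <;> by_cases h3 : b i ∈ A <;>
    by_cases h4 : b i ∈ B <;> simp [ind, h1, h2, h3, h4]

theorem cutVec_sdiff_add_cutVec_sdiff_le (A B : Finset V) :
    cutVec a b (A \ B) + cutVec a b (B \ A) ≤ cutVec a b A + cutVec a b B := by
  intro i
  simp only [Pi.add_apply, cutVec, cutEdges, mem_filter, mem_univ, true_and, mem_sdiff]
  by_cases h1 : a i ∈ A <;> by_cases h2 : a i ∈ B <;> by_cases h3 : b i ∈ A <;>
    by_cases h4 : b i ∈ B <;> simp [ind, h1, h2, h3, h4]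

noncomputable def supportInd (x : ι → ℝ) : ι → ℝ := fun i => ind (0 < x i)

theorem supportInd_mul_eq_of_le {u w x : ι → ℝ} (hx : 0 ≤ x) (huw : u ≤ w)
    (h : u ⬝ᵥ x = w ⬝ᵥ x) : supportInd x * u = supportInd x * w := by
  have hterm : ∀ i ∈ univ, 0 ≤ (w i - u i) * x i :=
    fun i _ => mul_nonneg (sub_nonneg.2 (huw i)) (hx i)
  have hzero : ∑ i, (w i - u i) * x i = 0 := by
    simp only [sub_mul, sum_sub_distrib]
    exact sub_eq_zero.2 h.symm
  ext i
  by_cases hxi : 0 < x i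
  · have := (sum_eq_zero_iff_of_nonneg hterm).1 hzero i (mem_univ i)
    simp only [Pi.mul_apply, supportInd, ind_of_pos hxi, one_mul]
    nlinarith
  · simp [supportInd, ind_of_neg hxi]

noncomputable def supportCutVec (x : ι → ℝ) (S : Finset V) : ι → ℝ :=
  supportInd x * cutVec a b S

def IsTight (f : Finset V → ℤ) (x : ι → ℝ) (S : Finset V) : Prop :=
  cutVec a b S ⬝ᵥ x = f S

variable {a b} {f : Finset V → ℤ} {x : ι → ℝ}

theorem IsTight.uncross_of_le (hx : 0 ≤ x) (hfeas : ∀ S, (f S : ℝ) ≤ cutVec a b S ⬝ᵥ x)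
    {A B C D : Finset V} (hA : IsTight a b f x A) (hB : IsTight a b f x B)
    (hf : f A + f B ≤ f C + f D)
    (hle : cutVec a b C + cutVec a b D ≤ cutVec a b A + cutVec a b B) :
    IsTight a b f x C ∧ IsTight a b f x D ∧
      supportCutVec a b x A + supportCutVec a b x B =
        supportCutVec a b x C + supportCutVec a b x D := by
  have hdot := dotProduct_le_dotProduct_of_nonneg_right hle hx
  have hf' : (f A : ℝ) + f B ≤ f C + f D := by exact_mod_cast hf
  have hC := hfeas C
  have hD := hfeas D
  simp only [add_dotProduct] at hdot
  unfold IsTight at *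
  refine ⟨by linarith, by linarith, ?_⟩
  simp only [supportCutVec, ← mul_add]
  exact (supportInd_mul_eq_of_le hx hle (by simp only [add_dotProduct]; linarith)).symm

theorem IsTight.uncross (hf : SkewSupermodular f) (hx : 0 ≤ x)
    (hfeas : ∀ S, (f S : ℝ) ≤ cutVec a b S ⬝ᵥ x) {A B : Finset V}
    (hA : IsTight a b f x A) (hB : IsTight a b f x B) :
    (IsTight a b f x (A ∩ B) ∧ IsTight a b f x (A ∪ B) ∧
      supportCutVec a b x A + supportCutVec a b x B =
        supportCutVec a b x (A ∩ B) + supportCutVec a b x (A ∪ B)) ∨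
    (IsTight a b f x (A \ B) ∧ IsTight a b f x (B \ A) ∧
      supportCutVec a b x A + supportCutVec a b x B =
        supportCutVec a b x (A \ B) + supportCutVec a b x (B \ A)) :=
  (hf A B).imp (hA.uncross_of_le hx hfeas hB · (cutVec_inter_add_cutVec_union_le a b A B))
    (hA.uncross_of_le hx hfeas hB · (cutVec_sdiff_add_cutVec_sdiff_le a b A B))

theorem IsTight.exists_uncrossing (hf : SkewSupermodular f) (hx : 0 ≤ x)
    (hfeas : ∀ S, (f S : ℝ) ≤ cutVec a b S ⬝ᵥ x) {L : Finset (Finset V)} (hL : IsLaminar L)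
    {S W : Finset V} (hS : IsTight a b f x S) (hW : W ∈ L) (hWt : IsTight a b f x W)
    (hWS : Crosses W S) :
    ∃ C D, IsTight a b f x C ∧ IsTight a b f x D ∧
      supportCutVec a b x S + supportCutVec a b x W =
        supportCutVec a b x C + supportCutVec a b x D ∧
      crossNum L C < crossNum L S ∧ crossNum L D < crossNum L S := by
  have hSW := hWS.symm
  rcases hS.uncross hf hx hfeas hWt with ⟨hC, hD, hsum⟩ | ⟨hC, hD, hsum⟩
  · exact ⟨_, _, hC, hD, hsum,
      crossNum_lt hL hW hWS (not_crosses_inter_right S W) fun _ => Crosses.of_crosses_inter,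
      crossNum_lt hL hW hWS (not_crosses_union_right S W) fun _ => hSW.of_crosses_union⟩
  · exact ⟨_, _, hC, hD, hsum,
      crossNum_lt hL hW hWS (not_crosses_sdiff_left S W) fun _ => hSW.of_crosses_sdiff_left,
      crossNum_lt hL hW hWS (not_crosses_sdiff_right S W) fun _ => hSW.of_crosses_sdiff_right⟩

end Cuts

section LaminarBasis

variable {V ι : Type*} [Fintype V] [DecidableEq V] [Fintype ι] {a b : ι → V}
  {f : Finset V → ℤ} {x : ι → ℝ}

theorem exists_laminar_span (hf : SkewSupermodular f) (hx : 0 ≤ x)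
    (hfeas : ∀ S, (f S : ℝ) ≤ cutVec a b S ⬝ᵥ x) :
    ∃ L : Finset (Finset V), IsLaminar L ∧ (∀ S ∈ L, IsTight a b f x S) ∧
      ∀ S, IsTight a b f x S →
        supportCutVec a b x S ∈ Submodule.span ℝ (supportCutVec a b x '' L) := by
  classical
  obtain ⟨L, hLmem, hLmax⟩ := exists_max_image
    {L : Finset (Finset V) | IsLaminar L ∧ ∀ S ∈ L, IsTight a b f x S} card
    ⟨∅, mem_filter.2 ⟨mem_univ _, by simp [IsLaminar]⟩⟩
  obtain ⟨hL, hLt⟩ := (mem_filter.1 hLmem).2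
  have hmem : ∀ S, IsTight a b f x S → (∀ W ∈ L, ¬Crosses W S) → S ∈ L := by
    intro S hS hnc
    by_contra hSL
    have := hLmax (insert S L) (mem_filter.2 ⟨mem_univ _, hL.insert hnc, by
      simpa [forall_mem_insert] using ⟨hS, hLt⟩⟩)
    rw [card_insert_of_notMem hSL] at this
    omega
  refine ⟨L, hL, hLt, fun S hS => ?_⟩
  induction hn : crossNum L S using Nat.strong_induction_on generalizing S with
  | _ n ih =>
    by_cases hnc : ∀ W ∈ L, ¬Crosses W S
    · exact Submodule.subset_span ⟨S, hmem S hS hnc, rfl⟩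
    push Not at hnc
    obtain ⟨W, hW, hWS⟩ := hnc
    obtain ⟨C, D, hC, hD, hsum, hCn, hDn⟩ := hS.exists_uncrossing hf hx hfeas hL hW (hLt W hW) hWS
    rw [eq_sub_of_add_eq hsum]
    exact sub_mem (add_mem (ih _ (hn ▸ hCn) C hC rfl) (ih _ (hn ▸ hDn) D hD rfl))
      (Submodule.subset_span ⟨W, hW, rfl⟩)

theorem exists_laminar_basis (hf : SkewSupermodular f) (hx : 0 ≤ x)
    (hfeas : ∀ S, (f S : ℝ) ≤ cutVec a b S ⬝ᵥ x) :
    ∃ L : Finset (Finset V), IsLaminar L ∧ (∀ S ∈ L, IsTight a b f x S) ∧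
      LinearIndepOn ℝ (supportCutVec a b x) (L : Set (Finset V)) ∧
      ∀ S, IsTight a b f x S →
        supportCutVec a b x S ∈ Submodule.span ℝ (supportCutVec a b x '' L) := by
  classical
  obtain ⟨L, hL, hLt, hspan⟩ := exists_laminar_span hf hx hfeas
  obtain ⟨B, hBL, -, hBspan, hBind⟩ := exists_linearIndepOn_extension
    (linearIndepOn_empty ℝ (supportCutVec a b x)) (Set.empty_subset (L : Set (Finset V)))
  have hB : (({S ∈ L | S ∈ B} : Finset (Finset V)) : Set (Finset V)) = B := by
    ext S
    simpa using fun h => hBL h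
  refine ⟨{S ∈ L | S ∈ B}, hL.mono (filter_subset _ _), fun S hS => hLt S (mem_filter.1 hS).1,
    by rwa [hB], fun S hS => ?_⟩
  rw [hB]
  exact Submodule.span_le.2 hBspan (hspan S hS)

end LaminarBasis

section CoverPolytope

variable {V ι : Type*} [DecidableEq V] [Fintype ι] [DecidableEq ι] (a b : ι → V)
  (f : Finset V → ℤ)

/-- The constraints `x i ≥ 0`, `-x i ≥ -1` and `x(δ S) ≥ f S`, as rows of a linear system. -/
noncomputable def coverRow : ι ⊕ ι ⊕ Finset V → ι → ℝ :=
  Sum.elim (fun i => Pi.single i 1) (Sum.elim (fun i => -Pi.single i 1) (cutVec a b))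

def coverBound : ι ⊕ ι ⊕ Finset V → ℝ :=
  Sum.elim 0 (Sum.elim (fun _ => -1) (fun S => f S))

theorem coverPolytope_eq :
    {x : ι → ℝ | (∀ i, 0 ≤ x i ∧ x i ≤ 1) ∧
      ∀ S : Finset V, (f S : ℝ) ≤ ∑ i ∈ cutEdges a b S, x i} =
    {y | ∀ j, coverBound f j ≤ coverRow a b j ⬝ᵥ y} := by
  ext y
  simp [coverRow, coverBound, cutVec_dotProduct, forall_and, and_assoc]

variable {a b f} {x : ι → ℝ}

theorem single_mem_span_of_mem_extremePoints [Fintype V]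
    (hx : x ∈ Set.extremePoints ℝ {y | ∀ j, coverBound f j ≤ coverRow a b j ⬝ᵥ y})
    (hx1 : ∀ i, x i < 1) {L : Finset (Finset V)}
    (hL : ∀ S, IsTight a b f x S →
      supportCutVec a b x S ∈ Submodule.span ℝ (supportCutVec a b x '' L))
    {i : ι} (hi : 0 < x i) :
    Pi.single i 1 ∈ Submodule.span ℝ (supportCutVec a b x '' L) := by
  set π := LinearMap.mulLeft ℝ (supportInd x)
  have hπ : π (Pi.single i 1) = Pi.single i 1 := by
    ext j
    rcases eq_or_ne j i with rfl | hj
    · simp [π, supportInd, ind_of_pos hi]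
    · simp [π, hj]
  have hmem := Submodule.mem_map_of_mem (f := π)
    ((span_tight_rows_eq_top_of_mem_extremePoints hx).symm ▸ Submodule.mem_top :
      Pi.single i (1 : ℝ) ∈ _)
  rw [hπ, Submodule.map_span] at hmem
  refine Submodule.span_le.2 ?_ hmem
  rintro _ ⟨_, ⟨j, hj, rfl⟩, rfl⟩
  rcases j with k | k | S
  · have hk : x k = 0 := by simpa [coverRow, coverBound] using hj
    have h0 : π (coverRow a b (.inl k)) = 0 := by
      ext j
      rcases eq_or_ne j k with rfl | hj
      · simp [π, coverRow, supportInd, ind, hk]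
      · simp [π, coverRow, hj]
    rw [SetLike.mem_coe, h0]
    exact zero_mem _
  · have hk : x k = 1 := by simpa [coverRow, coverBound] using hj
    exact absurd hk (hx1 k).ne
  · exact hL S hj

theorem card_support_le {L : Finset (Finset V)}
    (h : ∀ i, 0 < x i → Pi.single i 1 ∈ Submodule.span ℝ (supportCutVec a b x '' L)) :
    #{i | 0 < x i} ≤ #L := by
  classical
  have hind : LinearIndependent ℝ
      (fun i : ({i | 0 < x i} : Finset ι) => (Pi.single (i : ι) 1 : ι → ℝ)) := by
    simpa [Function.comp_def] using
      (Pi.basisFun ℝ ι).linearIndependent.comp _ Subtype.val_injective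
  calc #{i | 0 < x i}
      = Module.finrank ℝ (Submodule.span ℝ (Set.range fun i : ({i | 0 < x i} : Finset ι) =>
          (Pi.single (i : ι) 1 : ι → ℝ))) := by
        rw [finrank_span_eq_card hind, Fintype.card_coe]
    _ ≤ Module.finrank ℝ (Submodule.span ℝ (supportCutVec a b x '' L)) :=
        Submodule.finrank_mono (Submodule.span_le.2 (Set.range_subset_iff.2 fun i =>
          h i (mem_filter.1 i.2).2))
    _ ≤ #(L.image (supportCutVec a b x)) := by
        rw [← coe_image]
        exact finrank_span_finset_le_card _
    _ ≤ #L := card_image_le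

end CoverPolytope

section Tokens

variable {V ι : Type*} [DecidableEq V] {a b : ι → V} {L : Finset (Finset V)} {x : ι → ℝ}

variable (a b L x) in
noncomputable def token (i : ι) (S : Finset V) : ℝ :=
  x i * ind (IsMinCover L {a i} S) + x i * ind (IsMinCover L {b i} S) +
    (1 - 2 * x i) * ind (IsMinCover L {a i, b i} S)

theorem token_nonneg (hx : 0 ≤ x) (hx2 : ∀ i, x i < 1 / 2) (i : ι) (S : Finset V) :
    0 ≤ token a b L x i S :=
  add_nonneg (add_nonneg (mul_nonneg (hx i) (ind_nonneg _)) (mul_nonneg (hx i) (ind_nonneg _)))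
    (mul_nonneg (by linarith [hx2 i]) (ind_nonneg _))

theorem sum_token_le (hx : 0 ≤ x) (i : ι) :
    ∑ S ∈ L, token a b L x i S ≤
      2 * x i + (1 - 2 * x i) * ind (∃ S ∈ L, IsMinCover L {a i, b i} S) := by
  simp only [token, sum_add_distrib, ← mul_sum]
  rw [sum_ind_eq_ind_exists L fun _ _ _ _ => IsMinCover.unique,
    sum_ind_eq_ind_exists L fun _ _ _ _ => IsMinCover.unique,
    sum_ind_eq_ind_exists L fun _ _ _ _ => IsMinCover.unique]
  have ha := mul_le_mul_of_nonneg_left (ind_le_one (∃ S ∈ L, IsMinCover L {a i} S)) (hx i)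
  have hb := mul_le_mul_of_nonneg_left (ind_le_one (∃ S ∈ L, IsMinCover L {b i} S)) (hx i)
  linarith

variable [Fintype ι]

theorem IsLaminar.token_eq (hL : IsLaminar L) {S : Finset V} (hS : S ∈ L) (i : ι) :
    token a b L x i S =
      x i * (cutVec a b S i - ∑ R ∈ children L S, cutVec a b R i) +
        ind (IsMinCover L {a i, b i} S) := by
  simp only [token, cutVec, ind_mem_cutEdges, hL.ind_isMinCover hS (singleton_nonempty _),
    hL.ind_isMinCover hS (insert_nonempty _ _), sum_add_distrib, sum_sub_distrib, ← mul_sum]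
  ring

theorem sum_support_mul_eq_dotProduct (hx : 0 ≤ x) (u : ι → ℝ) :
    ∑ i with 0 < x i, x i * u i = u ⬝ᵥ x := by
  rw [dotProduct, sum_filter]
  refine sum_congr rfl fun i _ => ?_
  split_ifs with h
  · ring
  · simp [le_antisymm (not_lt.1 h) (hx i)]

variable {f : Finset V → ℤ}

theorem IsLaminar.exists_int_sum_token (hL : IsLaminar L) (hx : 0 ≤ x)
    (hLt : ∀ S ∈ L, IsTight a b f x S) {S : Finset V} (hS : S ∈ L) :
    ∃ z : ℤ, ∑ i with 0 < x i, token a b L x i S = z := by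
  classical
  refine ⟨f S - ∑ R ∈ children L S, f R +
    ∑ i with 0 < x i, if IsMinCover L {a i, b i} S then 1 else 0, ?_⟩
  have hchild : ∀ R ∈ children L S, IsTight a b f x R := fun R hR => hLt R (mem_filter.1 hR).1
  simp only [hL.token_eq hS, mul_sub, mul_sum, sum_add_distrib, sum_sub_distrib]
  rw [sum_comm, sum_support_mul_eq_dotProduct hx, hLt S hS,
    sum_congr rfl fun R hR => (sum_support_mul_eq_dotProduct hx _).trans (hchild R hR)]
  push_cast [ind]
  rfl

theorem IsLaminar.cutVec_eq_sum_children_of_token_eq_zero (hL : IsLaminar L) {S : Finset V}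
    (hS : S ∈ L) {i : ι} (hi : 0 < x i) (hi2 : x i < 1 / 2) (h : token a b L x i S = 0) :
    cutVec a b S i = ∑ R ∈ children L S, cutVec a b R i := by
  have h1 := mul_nonneg hi.le (ind_nonneg (IsMinCover L {a i} S))
  have h2 := mul_nonneg hi.le (ind_nonneg (IsMinCover L {b i} S))
  have h3 : 0 ≤ (1 - 2 * x i) * ind (IsMinCover L {a i, b i} S) :=
    mul_nonneg (by linarith) (ind_nonneg _)
  have h3' : (1 - 2 * x i) * ind (IsMinCover L {a i, b i} S) = 0 := by
    unfold token at h
    linarith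
  have hcover : ind (IsMinCover L {a i, b i} S) = 0 :=
    (mul_eq_zero.1 h3').resolve_left (by linarith)
  rw [hL.token_eq hS, hcover, add_zero] at h
  linarith [(mul_eq_zero.1 h).resolve_left hi.ne']

theorem IsLaminar.sum_token_pos (hL : IsLaminar L) (hx : 0 ≤ x) (hx2 : ∀ i, x i < 1 / 2)
    (hind : LinearIndepOn ℝ (supportCutVec a b x) (L : Set (Finset V))) {S : Finset V}
    (hS : S ∈ L) : 0 < ∑ i with 0 < x i, token a b L x i S := by
  refine (sum_nonneg fun i _ => token_nonneg hx hx2 i S).lt_of_ne fun hzero => ?_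
  have htok : ∀ i, 0 < x i → token a b L x i S = 0 := fun i hi =>
    (sum_eq_zero_iff_of_nonneg fun i _ => token_nonneg hx hx2 i S).1 hzero.symm i
      (mem_filter.2 ⟨mem_univ i, hi⟩)
  have hdep : supportCutVec a b x S = ∑ R ∈ children L S, supportCutVec a b x R := by
    ext i
    simp only [supportCutVec, Pi.mul_apply, Finset.sum_apply, ← mul_sum]
    by_cases hi : 0 < x i
    · rw [hL.cutVec_eq_sum_children_of_token_eq_zero hS hi (hx2 i) (htok i hi)]
    · simp [supportInd, ind_of_neg hi]
  refine hind.notMem_span hS ?_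
  rw [hdep]
  exact Submodule.sum_mem _ fun R hR => Submodule.subset_span
    ⟨R, ⟨mem_coe.2 (mem_filter.1 hR).1, (mem_filter.1 hR).2.1.ne⟩, rfl⟩

theorem IsLaminar.one_le_sum_token (hL : IsLaminar L) (hx : 0 ≤ x) (hx2 : ∀ i, x i < 1 / 2)
    (hLt : ∀ S ∈ L, IsTight a b f x S)
    (hind : LinearIndepOn ℝ (supportCutVec a b x) (L : Set (Finset V))) {S : Finset V}
    (hS : S ∈ L) : 1 ≤ ∑ i with 0 < x i, token a b L x i S := by
  obtain ⟨z, hz⟩ := hL.exists_int_sum_token hx hLt hS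
  have hpos := hL.sum_token_pos hx hx2 hind hS
  rw [hz] at hpos ⊢
  exact_mod_cast (Int.cast_pos.1 hpos : 0 < z)

theorem IsLaminar.not_exists_isMinCover_of_mem_cutEdges (hL : IsLaminar L) {S₀ : Finset V}
    (hS₀ : S₀ ∈ L) (hmax : ∀ S ∈ L, #S ≤ #S₀) {i : ι} (hi : i ∈ cutEdges a b S₀) :
    ¬∃ S ∈ L, IsMinCover L {a i, b i} S := by
  rintro ⟨S, hS, -, hab, -⟩
  rw [insert_subset_iff, singleton_subset_iff] at hab
  simp only [cutEdges, mem_filter, mem_univ, true_and] at hi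
  have hinter : ¬Disjoint S S₀ := by
    by_cases ha : a i ∈ S₀
    · exact not_disjoint_iff.2 ⟨a i, hab.1, ha⟩
    · exact not_disjoint_iff.2 ⟨b i, hab.2, by tauto⟩
  rcases hL.subset_or_subset hS hS₀ hinter with h | h
  · exact hi ⟨fun _ => h hab.2, fun _ => h hab.1⟩
  · rw [← eq_of_subset_of_card_le h (hmax S hS)] at hab
    exact hi ⟨fun _ => hab.2, fun _ => hab.1⟩

theorem IsLaminar.card_lt_card_support (hL : IsLaminar L) (hx : 0 ≤ x) (hx2 : ∀ i, x i < 1 / 2)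
    (hLt : ∀ S ∈ L, IsTight a b f x S)
    (hind : LinearIndepOn ℝ (supportCutVec a b x) (L : Set (Finset V))) (hne : L.Nonempty) :
    #L < #{i | 0 < x i} := by
  obtain ⟨S₀, hS₀, hmax⟩ := exists_max_image L card hne
  obtain ⟨i₀, hi₀⟩ := Function.ne_iff.1 (hind.ne_zero hS₀)
  have hxi₀ : 0 < x i₀ := by
    by_contra h
    simp [supportCutVec, supportInd, ind_of_neg h] at hi₀
  have hcut₀ : i₀ ∈ cutEdges a b S₀ := by
    by_contra h
    simp [supportCutVec, cutVec, ind_of_neg h] at hi₀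
  have hedge : ∀ i, ∑ S ∈ L, token a b L x i S ≤ 1 := fun i => by
    have := mul_le_mul_of_nonneg_left (ind_le_one (∃ S ∈ L, IsMinCover L {a i, b i} S))
      (by linarith [hx2 i] : 0 ≤ 1 - 2 * x i)
    linarith [sum_token_le (a := a) (b := b) (L := L) hx i]
  have hedge₀ : ∑ S ∈ L, token a b L x i₀ S < 1 := by
    have := sum_token_le (a := a) (b := b) (L := L) hx i₀
    rw [ind_of_neg (hL.not_exists_isMinCover_of_mem_cutEdges hS₀ hmax hcut₀), mul_zero,
      add_zero] at this
    linarith [hx2 i₀]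
  have : (#L : ℝ) < #{i | 0 < x i} := calc
    (#L : ℝ) = ∑ S ∈ L, 1 := by simp
    _ ≤ ∑ S ∈ L, ∑ i with 0 < x i, token a b L x i S :=
      sum_le_sum fun S hS => hL.one_le_sum_token hx hx2 hLt hind hS
    _ = ∑ i with 0 < x i, ∑ S ∈ L, token a b L x i S := sum_comm
    _ < ∑ i with 0 < x i, 1 :=
      sum_lt_sum (fun i _ => hedge i) ⟨i₀, mem_filter.2 ⟨mem_univ _, hxi₀⟩, hedge₀⟩
    _ = #{i | 0 < x i} := by simp
  exact_mod_cast this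

end Tokens

end Jain

theorem stmt12_general {V ι : Type*} [Fintype V] [DecidableEq V] [Fintype ι]
    (a b : ι → V)
    (f : Finset V → ℤ) (hf : SkewSupermodular f)
    (hnt : ∃ S : Finset V, S.Nonempty ∧ S ≠ Finset.univ ∧ 0 < f S)
    (P : Set (ι → ℝ))
    (hP : P = {x : ι → ℝ | (∀ i, 0 ≤ x i ∧ x i ≤ 1) ∧
      ∀ S : Finset V, (f S : ℝ) ≤ ∑ i ∈ cutEdges a b S, x i})
    (xbar : ι → ℝ) (hxbar : xbar ∈ Set.extremePoints ℝ P) :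
    ∃ i : ι, (1 : ℝ) / 2 ≤ xbar i := by
  classical
  open Jain in
  by_contra! hhalf
  rw [hP, coverPolytope_eq] at hxbar
  have hx : 0 ≤ xbar := fun i => by simpa [coverRow, coverBound] using hxbar.1 (.inl i)
  have hfeas : ∀ S, (f S : ℝ) ≤ cutVec a b S ⬝ᵥ xbar := fun S => hxbar.1 (.inr (.inr S))
  obtain ⟨L, hL, hLt, hind, hspan⟩ := exists_laminar_basis hf hx hfeas
  have hFL := card_support_le fun i hi =>
    single_mem_span_of_mem_extremePoints hxbar (fun i => (hhalf i).trans (by norm_num)) hspan hi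
  obtain ⟨S, -, -, hS⟩ := hnt
  obtain ⟨i, hi⟩ : ∃ i, 0 < xbar i := by
    by_contra! h
    have := (hfeas S).trans_eq (by rw [le_antisymm h hx, dotProduct_zero])
    exact hS.not_ge (by exact_mod_cast this)
  have hF : 0 < #{i | 0 < xbar i} := card_pos.2 ⟨i, mem_filter.2 ⟨mem_univ _, hi⟩⟩
  exact (hL.card_lt_card_support hx hhalf hLt hind (card_pos.1 (hF.trans_le hFL))).not_ge hFL

/-- Jain's theorem: for a non-trivial skew-supermodular `f`, any extreme point of the
LP relaxation polytope for covering `f` by the graph has a coordinate of value at least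
`1/2`. -/
theorem stmt12 {V ι : Type*} [Fintype V] [DecidableEq V] [Fintype ι]
    (a b : ι → V) (hab : ∀ i, a i ≠ b i)
    (f : Finset V → ℤ) (hf : SkewSupermodular f)
    (hnt : ∃ S : Finset V, S.Nonempty ∧ S ≠ Finset.univ ∧ 0 < f S)
    (P : Set (ι → ℝ))
    (hP : P = {x : ι → ℝ | (∀ i, 0 ≤ x i ∧ x i ≤ 1) ∧
      ∀ S : Finset V, (f S : ℝ) ≤ ∑ i ∈ cutEdges a b S, x i})
    (xbar : ι → ℝ) (hxbar : xbar ∈ Set.extremePoints ℝ P) :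
    ∃ i : ι, (1 : ℝ) / 2 ≤ xbar i :=
  stmt12_general a b f hf hnt P hP xbar hxbar
end
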